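/- Let x_1,...,x_n be elements of a field F, d ≥ n, and let R(X) be the remainder of X^d upon division by ∏_{i=1}^n (X - x_i). Then the coefficient of X^{n-1} in R(X) equals h_{d-n+1}(x_1,...,x_n). -/

import Mathlib

/-!
Reflecting `X ^ d = P * Q + r` in degree `d` gives `1 = rev P * Q̃ + r̃` with `Q̃` of degree
`≤ d - n` and `r̃` divisible by `t ^ (d + 1 - n)`, the lowest coefficient of `r̃` being the
coefficient of `X ^ (n - 1)` in `r`. Multiplying by `H = (rev P)⁻¹` and comparing coefficients
of `t ^ (d + 1 - n)` identifies that coefficient with the one of `H`. For `P = ∏ (X - x_i)`,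
`rev P = ∏ (1 - x_i t)`, so `H = ∏ (1 - x_i t)⁻¹` is the generating function of the `h_k`.
-/

open Finset

/-- Complete homogeneous symmetric polynomial of degree `k` (an integer, with
`hpoly n k x = 0` for `k < 0`) evaluated at `x : Fin n → F`. -/
def hpoly {F : Type*} [CommRing F] (n : ℕ) (k : ℤ) (x : Fin n → F) : F :=
  if 0 ≤ k then ∑ lam ∈ Finset.Nat.antidiagonalTuple n k.toNat, ∏ i, x i ^ lam i else 0

/-- Elementary symmetric polynomial of degree `k` evaluated at `x : Fin n → F`. -/
def epoly {F : Type*} [CommRing F] (n k : ℕ) (x : Fin n → F) : F :=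
  ∑ s ∈ (Finset.univ : Finset (Fin n)).powersetCard k, ∏ i ∈ s, x i

/-- The weighted power sum `S_d(x_1,…,x_n)`. -/
def Sfun {F : Type*} [Field F] {n : ℕ} (x : Fin n → F) (d : ℕ) : F :=
  ∑ i, x i ^ d / ∏ j ∈ Finset.univ.erase i, (x i - x j)

open Polynomial

theorem Polynomial.reverse_prod_of_domain {R ι : Type*} [CommSemiring R] [NoZeroDivisors R]
    (s : Finset ι) (f : ι → R[X]) : (∏ i ∈ s, f i).reverse = ∏ i ∈ s, (f i).reverse := by
  classical
  induction s using Finset.induction_on with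
  | empty => simpa using reverse_C (1 : R)
  | insert a s ha ih => rw [prod_insert ha, prod_insert ha, reverse_mul_of_domain, ih]

theorem Polynomial.reverse_X_sub_C {R : Type*} [CommRing R] [Nontrivial R] (a : R) :
    (X - C a).reverse = 1 - C a * X := by
  have hX : (X : R[X]).reverse = 1 := by
    simpa using (reverse_mul_X (C (1 : R))).trans (reverse_C 1)
  rw [sub_eq_add_neg, ← C_neg, reverse_add_C, hX]
  simp [sub_eq_add_neg]

theorem Polynomial.coeff_X_pow_modByMonic_natDegree_sub_one {R : Type*} [CommRing R] {P : R[X]}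
    (hP : P.Monic) {H : PowerSeries R} (hH : (P.reverse : PowerSeries R) * H = 1) {d : ℕ}
    (hd : P.natDegree ≤ d) :
    (X ^ d %ₘ P).coeff (P.natDegree - 1) = PowerSeries.coeff (d + 1 - P.natDegree) H := by
  nontriviality R
  set n := P.natDegree
  set Q := X ^ d /ₘ P
  set r := X ^ d %ₘ P
  have hr : ∀ m, n ≤ m → r.coeff m = 0 := fun m hm =>
    coeff_eq_zero_of_degree_lt <| (degree_modByMonic_lt _ hP).trans_le <|
      degree_le_natDegree.trans (by exact_mod_cast hm)
  have hQ : Q.natDegree ≤ d - n := by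
    have := natDegree_X_pow_le (R := R) d
    simp only [Q, natDegree_divByMonic _ hP]
    omega
  have hsplit : reflect d r + P.reverse * reflect (d - n) Q = 1 := by
    rw [reverse, ← reflect_mul _ _ le_rfl hQ, Nat.add_sub_cancel' hd, ← reflect_add,
      modByMonic_add_div, reflect_monomial, revAt_le le_rfl, Nat.sub_self, pow_zero]
  have hexpand : (reflect d r : PowerSeries R) * H + reflect (d - n) Q = H := by
    have := congrArg (fun p : R[X] => (p : PowerSeries R) * H) hsplit
    simp only [coe_add, coe_mul, coe_one, one_mul, add_mul, mul_assoc] at this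
    rwa [mul_left_comm, hH, mul_one] at this
  have hH0 : PowerSeries.coeff 0 H = 1 := by
    simpa [coeff_zero_reverse, hP.leadingCoeff] using congrArg (PowerSeries.coeff 0) hH
  have hQ0 : (reflect (d - n) Q).coeff (d + 1 - n) = 0 := by
    rw [coeff_reflect, revAt_eq_self_of_lt (by omega)]
    exact coeff_eq_zero_of_natDegree_lt (by omega)
  rw [← hexpand, map_add, coeff_coe, hQ0, add_zero, PowerSeries.coeff_mul,
    sum_eq_single (d + 1 - n, 0)]
  · rw [hH0, mul_one, coeff_coe, coeff_reflect]
    rcases Nat.eq_zero_or_pos n with hn | hn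
    · rw [revAt_eq_self_of_lt (by omega), hr _ (by omega), hr _ (by omega)]
    · rw [revAt_le (by omega)]
      congr 1
      omega
  · rintro ⟨i, j⟩ hij hne
    rw [HasAntidiagonal.mem_antidiagonal] at hij
    rw [ne_eq, Prod.mk.injEq] at hne
    rw [coeff_coe, coeff_reflect, revAt_le (by omega), hr _ (by omega), zero_mul]
  · simp

theorem PowerSeries.one_sub_C_mul_X_mul_mk_pow {R : Type*} [CommRing R] (a : R) :
    (1 - C a * X) * mk (a ^ ·) = 1 := by
  simpa [rescale_mk, rescale_X, mul_comm] using
    congrArg (rescale a) (mk_one_mul_one_sub_eq_one R)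

theorem PowerSeries.coeff_prod_mk_pow {R : Type*} [CommRing R] {n : ℕ} (x : Fin n → R) (k : ℕ) :
    coeff k (∏ i, mk (x i ^ ·)) = ∑ lam ∈ Finset.Nat.antidiagonalTuple n k, ∏ i, x i ^ lam i := by
  rw [coeff_prod, finsuppAntidiag, sum_map]
  simp only [coeff_mk]
  show ∑ f ∈ (univ.piAntidiag k).attach, ∏ i, x i ^ f.1 i = _
  rw [sum_attach (univ.piAntidiag k) (fun f => ∏ i, x i ^ f i),
    piAntidiag_univ_fin_eq_antidiagonalTuple]

/-- The coefficient of `X^(n-1)` in the remainder of `X^d` upon division by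
`∏ (X - x_i)` is `h_(d-n+1)(x_1,…,x_n)`. -/
theorem remainder_leading_coeff {F : Type*} [Field F] (n d : ℕ) (hd : n ≤ d)
    (x : Fin n → F) :
    ((Polynomial.X ^ d) %ₘ (∏ i, (Polynomial.X - Polynomial.C (x i)))).coeff (n - 1)
      = hpoly n ((d : ℤ) - n + 1) x := by
  set P : F[X] := ∏ i, (X - C (x i))
  have hP : P.Monic := monic_prod_of_monic _ _ fun i _ => monic_X_sub_C (x i)
  have hdeg : P.natDegree = n := by simp [P]
  have hinv : (P.reverse : PowerSeries F) * ∏ i, PowerSeries.mk (x i ^ ·) = 1 := by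
    simp only [P, reverse_prod_of_domain, reverse_X_sub_C, ← coeToPowerSeries.ringHom_apply,
      map_prod, ← prod_mul_distrib]
    refine prod_eq_one fun i _ => ?_
    simpa using PowerSeries.one_sub_C_mul_X_mul_mk_pow (x i)
  have key := coeff_X_pow_modByMonic_natDegree_sub_one hP hinv (hdeg ▸ hd)
  rw [hdeg] at key
  rw [key, hpoly, if_pos (by omega), PowerSeries.coeff_prod_mk_pow]
  congr
  omega
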